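/- The dual iterates of Algorithm (DFG) remain bounded: for every x* ∈ X* and all k ≥ 0, ‖x^k − x*‖ ≤ ‖x^0 − x*‖ and ‖w^k − x*‖ ≤ ‖x^0 − x*‖, where w^k = x^{k−1} + θ_k (x^k − x^{k−1}) (with w^0 = x^0). -/

import Mathlib

/-!
The dual function `d` is concave with supergradient `∇d(x) = -G u(x) - g`, and the strong
convexity of the Lagrangian in `u` gives the descent inequality
`d a ≥ d b + ⟪∇d b, a - b⟫ - L_d / 2 * ‖a - b‖ ^ 2`. Hence every projected gradient step from `y^k`
satisfies the three-point inequality of FISTA, which makes the Lyapunov function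
`2 θ_k ^ 2 (f* - d x^k) + L_d ‖w^k - x*‖ ^ 2` nonincreasing; this bounds `w^k`. Since `y^{k+1}` is a
convex combination of `x^k` and `w^k`, and a projected step from `y^k` does not move away from
`x*`, the bound passes to `y^k` and `x^k`.
-/

open scoped RealInnerProductSpace
open Filter Topology

theorem StrongConvexOn.add_sq_le_of_isMinOn {E : Type*} [NormedAddCommGroup E] [NormedSpace ℝ E]
    {s : Set E} {m : ℝ} {F : E → ℝ} {u v : E} (hF : StrongConvexOn s m F)
    (hmin : IsMinOn F s u) (hu : u ∈ s) (hv : v ∈ s) :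
    F u + m / 2 * ‖v - u‖ ^ 2 ≤ F v := by
  have hsegment : ∀ t ∈ Set.Ioo (0 : ℝ) 1, F u + (1 - t) * (m / 2 * ‖v - u‖ ^ 2) ≤ F v := by
    rintro t ⟨ht0, ht1⟩
    have hle := isMinOn_iff.1 hmin _ (hF.1 hu hv (sub_nonneg.2 ht1.le) ht0.le (by ring))
    have hconv := hF.2 hu hv (sub_nonneg.2 ht1.le) ht0.le (by ring)
    simp only [smul_eq_mul, norm_sub_rev u v] at hconv
    refine le_of_mul_le_mul_left ?_ ht0
    linarith
  have hlim : Tendsto (fun t : ℝ => F u + (1 - t) * (m / 2 * ‖v - u‖ ^ 2)) (𝓝[>] 0)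
      (𝓝 (F u + m / 2 * ‖v - u‖ ^ 2)) := by
    refine Tendsto.mono_left ?_ nhdsWithin_le_nhds
    simpa using (Continuous.tendsto (by fun_prop) 0 :
      Tendsto (fun t : ℝ => F u + (1 - t) * (m / 2 * ‖v - u‖ ^ 2)) _ _)
  exact le_of_tendsto hlim (by filter_upwards [Ioo_mem_nhdsGT one_pos] using hsegment)

theorem inner_sub_le_zero_of_forall_norm_sub_le {E : Type*} [NormedAddCommGroup E]
    [InnerProductSpace ℝ E] {C : Set E} (hC : Convex ℝ C) {z q u : E} (hq : q ∈ C)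
    (hmin : ∀ w ∈ C, ‖z - q‖ ≤ ‖z - w‖) (hu : u ∈ C) : ⟪z - q, u - q⟫ ≤ 0 := by
  have : Nonempty C := ⟨⟨q, hq⟩⟩
  refine (norm_eq_iInf_iff_real_inner_le_zero hC hq).1 (le_antisymm ?_ ?_) u hu
  · exact le_ciInf fun w => hmin w w.2
  · exact ciInf_le ⟨0, by rintro _ ⟨w, rfl⟩; positivity⟩ (⟨q, hq⟩ : C)

section Lagrangian

variable {E F : Type*} [NormedAddCommGroup E] [InnerProductSpace ℝ E]
  [NormedAddCommGroup F] [InnerProductSpace ℝ F]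

def lagrangian (f : E → ℝ) (G : E →L[ℝ] F) (g : F) (v : E) (x : F) : ℝ :=
  f v + ⟪x, -G v - g⟫

variable {f : E → ℝ} {G : E →L[ℝ] F} {g : F} {U : Set E} {σ : ℝ} {u : F → E}

theorem lagrangian_sub_lagrangian (v : E) (x y : F) :
    lagrangian f G g v x - lagrangian f G g v y = ⟪-G v - g, x - y⟫ := by
  rw [lagrangian, lagrangian, inner_sub_right (-G v - g), real_inner_comm x, real_inner_comm y]
  ring

theorem strongConvexOn_lagrangian (hf : StrongConvexOn U σ f) (x : F) :
    StrongConvexOn U σ (lagrangian f G g · x) := by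
  refine ⟨hf.1, fun a ha b hb s t hs ht hst => ?_⟩
  have hlin : ⟪x, -G (s • a + t • b) - g⟫ = s * ⟪x, -G a - g⟫ + t * ⟪x, -G b - g⟫ := by
    rw [← real_inner_smul_right, ← real_inner_smul_right, ← inner_add_right]
    congr 1
    obtain rfl : s = 1 - t := by linarith
    rw [map_add, map_smul, map_smul]
    module
  have hconv := hf.2 ha hb hs ht hst
  simp only [lagrangian, smul_eq_mul, hlin] at hconv ⊢
  linarith

theorem lagrangian_le_of_mem_dual {K : Set F} {x : F} (hx : ∀ v ∈ K, 0 ≤ ⟪x, v⟫)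
    (hmin : IsMinOn (lagrangian f G g · x) U (u x)) {v : E} (hvU : v ∈ U) (hvK : G v + g ∈ K) :
    lagrangian f G g (u x) x ≤ f v := by
  have hcomp : ⟪x, -G v - g⟫ ≤ 0 := by
    rw [show -G v - g = -(G v + g) by abel, inner_neg_right, neg_nonpos]
    exact hx _ hvK
  have := isMinOn_iff.1 hmin v hvU
  unfold lagrangian at this ⊢
  linarith

theorem lagrangian_le_add_inner (hu : ∀ x, u x ∈ U ∧ IsMinOn (lagrangian f G g · x) U (u x))
    (a b : F) :
    lagrangian f G g (u a) a ≤ lagrangian f G g (u b) b + ⟪-G (u b) - g, a - b⟫ := by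
  have := isMinOn_iff.1 (hu a).2 _ (hu b).1
  linarith [lagrangian_sub_lagrangian (f := f) (G := G) (g := g) (u b) a b]

theorem add_inner_sub_le_lagrangian (hσ : 0 < σ) (hf : StrongConvexOn U σ f)
    (hu : ∀ x, u x ∈ U ∧ IsMinOn (lagrangian f G g · x) U (u x)) (a b : F) :
    lagrangian f G g (u b) b + ⟪-G (u b) - g, a - b⟫ - ‖G‖ ^ 2 / σ / 2 * ‖a - b‖ ^ 2 ≤
      lagrangian f G g (u a) a := by
  have hgrowth := (strongConvexOn_lagrangian hf b).add_sq_le_of_isMinOn (hu b).2 (hu b).1 (hu a).1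
  have hshift := lagrangian_sub_lagrangian (f := f) (G := G) (g := g) (u a) a b
  have hgrad : ⟪-G (u a) - g, a - b⟫ = ⟪-G (u b) - g, a - b⟫ - ⟪G (u a - u b), a - b⟫ := by
    rw [← inner_sub_left, map_sub]
    congr 1
    abel
  have hcs : ⟪G (u a - u b), a - b⟫ ≤ ‖G‖ * ‖u a - u b‖ * ‖a - b‖ :=
    (real_inner_le_norm _ _).trans
      (mul_le_mul_of_nonneg_right (G.le_opNorm _) (norm_nonneg _))
  have hsquare : ‖G‖ * ‖u a - u b‖ * ‖a - b‖ ≤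
      σ / 2 * ‖u a - u b‖ ^ 2 + ‖G‖ ^ 2 / σ / 2 * ‖a - b‖ ^ 2 := by
    have : σ / 2 * ‖u a - u b‖ ^ 2 + ‖G‖ ^ 2 / σ / 2 * ‖a - b‖ ^ 2 - ‖G‖ * ‖u a - u b‖ * ‖a - b‖ =
        (σ * ‖u a - u b‖ - ‖G‖ * ‖a - b‖) ^ 2 / (2 * σ) := by
      field_simp
      ring
    nlinarith [div_nonneg (sq_nonneg (σ * ‖u a - u b‖ - ‖G‖ * ‖a - b‖)) (by positivity : 0 ≤ 2 * σ)]
  linarith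

end Lagrangian

noncomputable def nesterovNext (t : ℝ) : ℝ := (1 + √(1 + 4 * t ^ 2)) / 2

theorem one_le_nesterovNext (t : ℝ) : 1 ≤ nesterovNext t := by
  have : 1 ≤ √(1 + 4 * t ^ 2) := Real.one_le_sqrt.2 (by nlinarith [sq_nonneg t])
  unfold nesterovNext
  linarith

theorem nesterovNext_mul_sub_one (t : ℝ) : nesterovNext t * (nesterovNext t - 1) = t ^ 2 := by
  have := Real.sq_sqrt (by positivity : (0 : ℝ) ≤ 1 + 4 * t ^ 2)
  unfold nesterovNext
  linear_combination this / 4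

section Nesterov

variable {E : Type*} [NormedAddCommGroup E] [InnerProductSpace ℝ E] {φ : E → ℝ} {L : ℝ}

theorem le_sub_of_projected_gradient_step (hL : 0 < L) {q y z u : E}
    (hsup : φ u ≤ φ y + ⟪q, u - y⟫) (hdesc : φ y + ⟪q, z - y⟫ - L / 2 * ‖z - y‖ ^ 2 ≤ φ z)
    (hproj : ⟪y + (1 / L) • q - z, u - z⟫ ≤ 0) :
    φ u ≤ φ z - L / 2 * ‖z - y‖ ^ 2 - L * ⟪y - u, z - y⟫ := by
  have hvec : L • (y + (1 / L) • q - z) = q - L • (z - y) := by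
    rw [smul_sub, smul_add, smul_smul, mul_one_div_cancel hL.ne', one_smul, smul_sub]
    abel
  have hproj' : ⟪q, u - y⟫ - ⟪q, z - y⟫ ≤ L * ⟪z - y, u - y⟫ - L * ‖z - y‖ ^ 2 := by
    have := mul_nonpos_of_nonneg_of_nonpos hL.le hproj
    rw [← real_inner_smul_left, hvec, show u - z = (u - y) - (z - y) by abel] at this
    rw [inner_sub_right (q - L • (z - y)), inner_sub_left, inner_sub_left, real_inner_smul_left,
      real_inner_smul_left, real_inner_self_eq_norm_sq] at this
    linarith
  rw [show y - u = -(u - y) by abel, inner_neg_left, real_inner_comm]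
  linarith

theorem sq_norm_sub_add_le_of_step {y z u : E}
    (h : φ u ≤ φ z - L / 2 * ‖z - y‖ ^ 2 - L * ⟪y - u, z - y⟫) :
    L * ‖z - u‖ ^ 2 + 2 * (φ u - φ z) ≤ L * ‖y - u‖ ^ 2 := by
  have hexp : ‖z - u‖ ^ 2 = ‖z - y‖ ^ 2 + 2 * ⟪y - u, z - y⟫ + ‖y - u‖ ^ 2 := by
    rw [show z - u = (z - y) + (y - u) by abel, norm_add_sq_real, real_inner_comm]
  rw [hexp]
  linarith

theorem lyapunov_step {T : ℝ} {x' y' xprev w w' xs : E} (hT : 1 ≤ T)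
    (hprev : φ xprev ≤ φ x' - L / 2 * ‖x' - y'‖ ^ 2 - L * ⟪y' - xprev, x' - y'⟫)
    (hopt : φ xs ≤ φ x' - L / 2 * ‖x' - y'‖ ^ 2 - L * ⟪y' - xs, x' - y'⟫)
    (hy : T • y' = (T - 1) • xprev + w) (hw : w' = xprev + T • (x' - xprev)) :
    2 * T ^ 2 * (φ xs - φ x') + L * ‖w' - xs‖ ^ 2 ≤
      2 * (T * (T - 1)) * (φ xs - φ xprev) + L * ‖w - xs‖ ^ 2 := by
  have hw_eq : w = T • y' - (T - 1) • xprev := by rw [hy]; abel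
  have hw' : w' - xs = (w - xs) + T • (x' - y') := by rw [hw, hw_eq]; module
  have hw_sub : w - xs = (T - 1) • (y' - xprev) + (y' - xs) := by rw [hw_eq]; module
  have hsq : ‖w' - xs‖ ^ 2 =
      ‖w - xs‖ ^ 2 + 2 * (T * ⟪w - xs, x' - y'⟫) + T ^ 2 * ‖x' - y'‖ ^ 2 := by
    rw [hw', norm_add_sq_real, real_inner_smul_right, norm_smul, Real.norm_of_nonneg (by linarith),
      mul_pow]
  have hinner : ⟪w - xs, x' - y'⟫ = (T - 1) * ⟪y' - xprev, x' - y'⟫ + ⟪y' - xs, x' - y'⟫ := by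
    rw [hw_sub, inner_add_left, real_inner_smul_left]
  rw [hsq, hinner]
  nlinarith [mul_le_mul_of_nonneg_left hprev (by nlinarith : (0 : ℝ) ≤ 2 * T * (T - 1)),
    mul_le_mul_of_nonneg_left hopt (by linarith : (0 : ℝ) ≤ 2 * T)]

/-- Algorithm (DFG) maximizing `φ` over `C`, with the projected gradient step abstracted to the
inequality it produces. -/
structure IsNesterovRun (φ : E → ℝ) (C : Set E) (L : ℝ) (θ : ℕ → ℝ) (x y w : ℕ → E) : Prop where
  theta_one : θ 1 = 1
  theta_succ : ∀ k, 1 ≤ k → θ (k + 1) = nesterovNext (θ k)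
  y_one : y 1 = x 0
  y_succ : ∀ k, 1 ≤ k → y (k + 1) = x k + ((θ k - 1) / θ (k + 1)) • (x k - x (k - 1))
  w_zero : w 0 = x 0
  w_succ : ∀ k, w (k + 1) = x k + θ (k + 1) • (x (k + 1) - x k)
  mem : ∀ k, x k ∈ C
  step : ∀ k, 1 ≤ k → ∀ u ∈ C,
    φ u ≤ φ (x k) - L / 2 * ‖x k - y k‖ ^ 2 - L * ⟪y k - u, x k - y k⟫

namespace IsNesterovRun

variable {C : Set E} {θ : ℕ → ℝ} {x y w : ℕ → E} {xs : E}

theorem one_le_theta (h : IsNesterovRun φ C L θ x y w) {k : ℕ} (hk : 1 ≤ k) : 1 ≤ θ k := by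
  induction k, hk using Nat.le_induction with
  | base => exact h.theta_one.ge
  | succ k hk _ => exact h.theta_succ k hk ▸ one_le_nesterovNext _

theorem theta_smul_y_succ (h : IsNesterovRun φ C L θ x y w) {k : ℕ} (hk : 1 ≤ k) :
    θ (k + 1) • y (k + 1) = (θ (k + 1) - 1) • x k + w k := by
  obtain ⟨j, rfl⟩ := Nat.exists_eq_add_of_le' hk
  have hT : θ (j + 1 + 1) ≠ 0 := (zero_lt_one.trans_le (h.one_le_theta (by omega))).ne'
  rw [h.y_succ _ hk, h.w_succ j, Nat.add_sub_cancel, smul_add, smul_smul, mul_div_cancel₀ _ hT]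
  module

theorem lyapunov_le (h : IsNesterovRun φ C L θ x y w) (hxs : xs ∈ C) {k : ℕ} (hk : 1 ≤ k) :
    2 * θ k ^ 2 * (φ xs - φ (x k)) + L * ‖w k - xs‖ ^ 2 ≤ L * ‖x 0 - xs‖ ^ 2 := by
  induction k, hk using Nat.le_induction with
  | base =>
    have hw : w 1 = x 1 := by rw [h.w_succ 0, h.theta_one, one_smul, add_sub_cancel]
    have := sq_norm_sub_add_le_of_step (h.step 1 le_rfl xs hxs)
    rw [h.y_one] at this
    rw [h.theta_one, hw]
    linarith
  | succ k hk ih =>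
    have := lyapunov_step (h.one_le_theta (by omega : 1 ≤ k + 1))
      (h.step (k + 1) (by omega) (x k) (h.mem k)) (h.step (k + 1) (by omega) xs hxs)
      (h.theta_smul_y_succ hk) (h.w_succ k)
    rw [h.theta_succ k hk, nesterovNext_mul_sub_one, ← h.theta_succ k hk] at this
    linarith

theorem norm_w_sub_le (h : IsNesterovRun φ C L θ x y w) (hL : 0 < L) (hxs : xs ∈ C)
    (hmax : IsMaxOn φ C xs) (k : ℕ) : ‖w k - xs‖ ≤ ‖x 0 - xs‖ := by
  rcases Nat.eq_zero_or_pos k with rfl | hk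
  · rw [h.w_zero]
  have hgap : 0 ≤ 2 * θ k ^ 2 * (φ xs - φ (x k)) :=
    mul_nonneg (by positivity) (sub_nonneg.2 (isMaxOn_iff.1 hmax _ (h.mem k)))
  have := h.lyapunov_le hxs hk
  refine (pow_le_pow_iff_left₀ (norm_nonneg _) (norm_nonneg _) two_ne_zero).1 ?_
  exact le_of_mul_le_mul_left (by linarith) hL

theorem norm_x_sub_le_norm_y_sub (h : IsNesterovRun φ C L θ x y w) (hL : 0 < L) (hxs : xs ∈ C)
    (hmax : IsMaxOn φ C xs) {k : ℕ} (hk : 1 ≤ k) : ‖x k - xs‖ ≤ ‖y k - xs‖ := by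
  have := sq_norm_sub_add_le_of_step (h.step k hk xs hxs)
  have := isMaxOn_iff.1 hmax _ (h.mem k)
  refine (pow_le_pow_iff_left₀ (norm_nonneg _) (norm_nonneg _) two_ne_zero).1 ?_
  exact le_of_mul_le_mul_left (by linarith) hL

theorem norm_y_sub_le (h : IsNesterovRun φ C L θ x y w) (hL : 0 < L) (hxs : xs ∈ C)
    (hmax : IsMaxOn φ C xs) {k : ℕ} (hk : 1 ≤ k) : ‖y k - xs‖ ≤ ‖x 0 - xs‖ := by
  induction k, hk using Nat.le_induction with
  | base => rw [h.y_one]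
  | succ k hk ih =>
    have hT := h.one_le_theta (by omega : 1 ≤ k + 1)
    have hT0 : θ (k + 1) ≠ 0 := (zero_lt_one.trans_le hT).ne'
    have hy : y (k + 1) = (1 - (θ (k + 1))⁻¹) • x k + (θ (k + 1))⁻¹ • w k := by
      rw [← inv_smul_smul₀ hT0 (y (k + 1)), h.theta_smul_y_succ hk, smul_add, smul_smul,
        inv_mul_eq_div, sub_div, div_self hT0, one_div]
    have hxk := (h.norm_x_sub_le_norm_y_sub hL hxs hmax hk).trans ih
    have hwk := h.norm_w_sub_le hL hxs hmax k
    rw [← mem_closedBall_iff_norm] at hxk hwk ⊢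
    rw [hy]
    exact convex_closedBall _ _ hxk hwk (sub_nonneg.2 (inv_le_one_of_one_le₀ hT))
      (inv_nonneg.2 (zero_le_one.trans hT)) (sub_add_cancel _ _)

theorem norm_x_sub_le (h : IsNesterovRun φ C L θ x y w) (hL : 0 < L) (hxs : xs ∈ C)
    (hmax : IsMaxOn φ C xs) (k : ℕ) : ‖x k - xs‖ ≤ ‖x 0 - xs‖ := by
  rcases Nat.eq_zero_or_pos k with rfl | hk
  · exact le_rfl
  exact (h.norm_x_sub_le_norm_y_sub hL hxs hmax hk).trans (h.norm_y_sub_le hL hxs hmax hk)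

end IsNesterovRun

end Nesterov

theorem stmt_9_general {n p : ℕ}
    (f : EuclideanSpace ℝ (Fin n) → ℝ) (σf : ℝ) (hσf : 0 < σf)
    (hfsc : StrongConvexOn Set.univ σf f)
    (U : Set (EuclideanSpace ℝ (Fin n))) (hUcv : Convex ℝ U)
    (G : EuclideanSpace ℝ (Fin n) →L[ℝ] EuclideanSpace ℝ (Fin p)) (hG : G ≠ 0) (g : EuclideanSpace ℝ (Fin p))
    (K : Set (EuclideanSpace ℝ (Fin p)))
    (Kstar : Set (EuclideanSpace ℝ (Fin p)))
    (hKstar : Kstar = {x : EuclideanSpace ℝ (Fin p) | ∀ v ∈ K, 0 ≤ ⟪x, v⟫})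
    (Lag : EuclideanSpace ℝ (Fin n) → EuclideanSpace ℝ (Fin p) → ℝ)
    (hLag : ∀ u x, Lag u x = f u + ⟪x, -(G u) - g⟫)
    (uu : EuclideanSpace ℝ (Fin p) → EuclideanSpace ℝ (Fin n))
    (huu : ∀ x : EuclideanSpace ℝ (Fin p), uu x ∈ U ∧ ∀ u ∈ U, Lag (uu x) x ≤ Lag u x)
    (d : EuclideanSpace ℝ (Fin p) → ℝ) (hd : ∀ x, d x = Lag (uu x) x)
    (ustar : EuclideanSpace ℝ (Fin n))
    (hustar : ustar ∈ U ∧ G ustar + g ∈ K ∧ ∀ u ∈ U, G u + g ∈ K → f ustar ≤ f u)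
    (fstar : ℝ) (hfstar : fstar = f ustar)
    (Xstar : Set (EuclideanSpace ℝ (Fin p))) (hXstar : Xstar = {x ∈ Kstar | d x = fstar})
    (Ld : ℝ) (hLd : Ld = ‖G‖ ^ 2 / σf)
    (projKs : EuclideanSpace ℝ (Fin p) → EuclideanSpace ℝ (Fin p))
    (hprojKs : ∀ z : EuclideanSpace ℝ (Fin p), projKs z ∈ Kstar ∧ ∀ w ∈ Kstar, ‖z - projKs z‖ ≤ ‖z - w‖)
    (θ : ℕ → ℝ) (hθ1 : θ 1 = 1)
    (hθrec : ∀ k, 1 ≤ k → θ (k + 1) = (1 + Real.sqrt (1 + 4 * θ k ^ 2)) / 2)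
    (x y : ℕ → EuclideanSpace ℝ (Fin p)) (hx0K : x 0 ∈ Kstar) (hy1 : y 1 = x 0)
    (hxrec : ∀ k, 1 ≤ k → x k = projKs (y k + (1 / Ld) • (-(G (uu (y k))) - g)))
    (hyrec : ∀ k, 1 ≤ k →
      y (k + 1) = x k + ((θ k - 1) / θ (k + 1)) • (x k - x (k - 1)))
    (w : ℕ → EuclideanSpace ℝ (Fin p)) (hw0 : w 0 = x 0)
    (hwrec : ∀ k, w (k + 1) = x k + θ (k + 1) • (x (k + 1) - x k))
 :
    ∀ xs ∈ Xstar, ∀ k : ℕ,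
      ‖x k - xs‖ ≤ ‖x 0 - xs‖ ∧ ‖w k - xs‖ ≤ ‖x 0 - xs‖ := by
  intro xs hxs
  obtain rfl : Lag = lagrangian f G g := funext fun u => funext fun x => hLag u x
  subst hXstar hLd
  obtain ⟨hxsK, hdxs⟩ := hxs
  have hf : StrongConvexOn U σf f := ⟨hUcv, fun a _ b _ => hfsc.2 (Set.mem_univ a) (Set.mem_univ b)⟩
  have hu : ∀ z, uu z ∈ U ∧ IsMinOn (lagrangian f G g · z) U (uu z) :=
    fun z => ⟨(huu z).1, isMinOn_iff.2 (huu z).2⟩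
  have hL : 0 < ‖G‖ ^ 2 / σf := by have := norm_pos_iff.2 hG; positivity
  have hKs : Convex ℝ Kstar := by
    have : Kstar = ProperCone.innerDual K := by
      ext z
      simp [hKstar, real_inner_comm]
    exact this ▸ (ProperCone.innerDual K).convex
  have hmax : IsMaxOn d Kstar xs := isMaxOn_iff.2 fun z hz => by
    rw [hKstar] at hz
    rw [hdxs, hfstar, hd]
    exact lagrangian_le_of_mem_dual hz (hu z).2 hustar.1 hustar.2.1
  have hrun : IsNesterovRun d Kstar (‖G‖ ^ 2 / σf) θ x y w :=
    { theta_one := hθ1, theta_succ := hθrec, y_one := hy1, y_succ := hyrec, w_zero := hw0,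
      w_succ := hwrec
      mem := fun k => (Nat.eq_zero_or_pos k).elim (fun hk => hk ▸ hx0K)
        fun hk => hxrec k hk ▸ (hprojKs _).1
      step := fun k hk u hu' => by
        rw [hxrec k hk]
        simp only [hd]
        exact le_sub_of_projected_gradient_step (φ := fun x => lagrangian f G g (uu x) x) hL
          (lagrangian_le_add_inner hu u (y k)) (add_inner_sub_le_lagrangian hσf hf hu _ _)
          (inner_sub_le_zero_of_forall_norm_sub_le hKs (hprojKs _).1 (hprojKs _).2 hu') }
  exact fun k => ⟨hrun.norm_x_sub_le hL hxsK hmax k, hrun.norm_w_sub_le hL hxsK hmax k⟩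

theorem stmt_9 {n p : ℕ}
    (f : EuclideanSpace ℝ (Fin n) → ℝ) (σf : ℝ) (hσf : 0 < σf)
    (hfc : Continuous f) (hfsc : StrongConvexOn Set.univ σf f)
    (U : Set (EuclideanSpace ℝ (Fin n))) (hUne : U.Nonempty) (hUcl : IsClosed U) (hUcv : Convex ℝ U)
    (G : EuclideanSpace ℝ (Fin n) →L[ℝ] EuclideanSpace ℝ (Fin p)) (hG : G ≠ 0) (g : EuclideanSpace ℝ (Fin p))
    (K : Set (EuclideanSpace ℝ (Fin p))) (hKne : K.Nonempty) (hKcl : IsClosed K) (hKcv : Convex ℝ K)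
    (hKcone : ∀ c : ℝ, 0 ≤ c → ∀ v ∈ K, c • v ∈ K)
    (Kstar : Set (EuclideanSpace ℝ (Fin p)))
    (hKstar : Kstar = {x : EuclideanSpace ℝ (Fin p) | ∀ v ∈ K, 0 ≤ ⟪x, v⟫})
    (Lag : EuclideanSpace ℝ (Fin n) → EuclideanSpace ℝ (Fin p) → ℝ)
    (hLag : ∀ u x, Lag u x = f u + ⟪x, -(G u) - g⟫)
    (uu : EuclideanSpace ℝ (Fin p) → EuclideanSpace ℝ (Fin n))
    (huu : ∀ x : EuclideanSpace ℝ (Fin p), uu x ∈ U ∧ ∀ u ∈ U, Lag (uu x) x ≤ Lag u x)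
    (d : EuclideanSpace ℝ (Fin p) → ℝ) (hd : ∀ x, d x = Lag (uu x) x)
    (ustar : EuclideanSpace ℝ (Fin n))
    (hustar : ustar ∈ U ∧ G ustar + g ∈ K ∧ ∀ u ∈ U, G u + g ∈ K → f ustar ≤ f u)
    (fstar : ℝ) (hfstar : fstar = f ustar)
    (Xstar : Set (EuclideanSpace ℝ (Fin p))) (hXstar : Xstar = {x ∈ Kstar | d x = fstar})
    (hXne : Xstar.Nonempty)
    (Ld : ℝ) (hLd : Ld = ‖G‖ ^ 2 / σf)
    (projKs : EuclideanSpace ℝ (Fin p) → EuclideanSpace ℝ (Fin p))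
    (hprojKs : ∀ z : EuclideanSpace ℝ (Fin p), projKs z ∈ Kstar ∧ ∀ w ∈ Kstar, ‖z - projKs z‖ ≤ ‖z - w‖)
    (θ : ℕ → ℝ) (hθ0 : θ 0 = 0) (hθ1 : θ 1 = 1)
    (hθrec : ∀ k, 1 ≤ k → θ (k + 1) = (1 + Real.sqrt (1 + 4 * θ k ^ 2)) / 2)
    (x y : ℕ → EuclideanSpace ℝ (Fin p)) (hx0K : x 0 ∈ Kstar) (hy1 : y 1 = x 0)
    (hxrec : ∀ k, 1 ≤ k → x k = projKs (y k + (1 / Ld) • (-(G (uu (y k))) - g)))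
    (hyrec : ∀ k, 1 ≤ k →
      y (k + 1) = x k + ((θ k - 1) / θ (k + 1)) • (x k - x (k - 1)))
    (w : ℕ → EuclideanSpace ℝ (Fin p)) (hw0 : w 0 = x 0)
    (hwrec : ∀ k, w (k + 1) = x k + θ (k + 1) • (x (k + 1) - x k))
 :
    ∀ xs ∈ Xstar, ∀ k : ℕ,
      ‖x k - xs‖ ≤ ‖x 0 - xs‖ ∧ ‖w k - xs‖ ≤ ‖x 0 - xs‖ :=
  stmt_9_general f σf hσf hfsc U hUcv G hG g K Kstar hKstar Lag hLag uu huu d hd ustar hustar fstar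
    hfstar Xstar hXstar Ld hLd projKs hprojKs θ hθ1 hθrec x y hx0K hy1 hxrec hyrec w hw0 hwrec
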